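/- Let M be a countable transitive model of ZF⁻ and let Col denote either Col(ω,Ord)^M or Col_*(ω,Ord)^M. Then no non-trivial maximal antichain of Col is an element of M; equivalently, every antichain A of Col with A ∈ M and A ≠ {∅} (where ∅, the empty function, is the maximal condition) is not a maximal antichain. -/

import Mathlib

set_option autoImplicit false

attribute [local instance] Classical.propDecidable

namespace CF

/-- First-order formulas of the language of set theory with `κ` class-predicate
variables (the languages `L^κ`) and `n` free set variables; `κ = 0` gives the
pure ∈-formulas. There is no class quantification. -/
inductive CFml : ℕ → ℕ → Type
  | mem {κ n : ℕ} (i j : Fin n) : CFml κ n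
  | eq {κ n : ℕ} (i j : Fin n) : CFml κ n
  | cls {κ n : ℕ} (X : Fin κ) (i : Fin n) : CFml κ n
  | not {κ n : ℕ} : CFml κ n → CFml κ n
  | or {κ n : ℕ} : CFml κ n → CFml κ n → CFml κ n
  | ex {κ n : ℕ} : CFml κ (n + 1) → CFml κ n

/-- Satisfaction of such a formula in the structure whose domain is the class `D`,
with class predicates interpreted by `Γ` and variable assignment `v`. -/
def SatC (D : Set ZFSet) : ∀ {κ n : ℕ}, (Fin κ → Set ZFSet) → CFml κ n → (Fin n → ZFSet) → Prop
  | _, _, _, .mem i j, v => v i ∈ v j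
  | _, _, _, .eq i j, v => v i = v j
  | _, _, Γ, .cls X i, v => v i ∈ Γ X
  | _, _, Γ, .not φ, v => ¬ SatC D Γ φ v
  | _, _, Γ, .or φ ψ, v => SatC D Γ φ v ∨ SatC D Γ ψ v
  | _, _, Γ, .ex φ, v => ∃ x ∈ D, SatC D Γ φ (Fin.snoc v x)

/-- Pure ∈-formulas with `n` free variables. -/
abbrev Fml (n : ℕ) : Type := CFml 0 n

/-- Satisfaction of an ∈-formula in `(M, ∈)` (quantifiers relativized to `M`). -/
def Sat (M : ZFSet) {n : ℕ} (φ : Fml n) (v : Fin n → ZFSet) : Prop :=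
  SatC M.toSet (fun i => i.elim0) φ v

/-- A `k`-ary relation on `M` is definable (with parameters) over `(M, ∈)`. -/
def DefinableOver (M : ZFSet) {k : ℕ} (S : (Fin k → ZFSet) → Prop) : Prop :=
  ∃ (m : ℕ) (φ : Fml (k + m)) (a : Fin m → ZFSet), (∀ i, a i ∈ M) ∧
    ∀ v : Fin k → ZFSet, (∀ i, v i ∈ M) → (S v ↔ Sat M φ (Fin.append v a))

/-- The collection of classes of `M` that are definable over `(M,∈)` with parameters. -/
def DefClasses (M : ZFSet) : Set (Set ZFSet) :=
  {S | S ⊆ M.toSet ∧ DefinableOver M (fun v : Fin 1 → ZFSet => v 0 ∈ S)}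

/-- `M` is a countable transitive model of `ZF⁻` (`ZF` without the power set axiom,
with Collection instead of Replacement), stated semantically via
the closure conditions that satisfaction of the `ZF⁻`-axioms imposes on a
transitive set (Foundation is automatic for transitive sets). -/
structure IsCTM (M : ZFSet) : Prop where
  countable : M.toSet.Countable
  transitive : M.IsTransitive
  empty_mem : (∅ : ZFSet) ∈ M
  pairing : ∀ x ∈ M, ∀ y ∈ M, ({x, y} : ZFSet) ∈ M
  union : ∀ x ∈ M, (ZFSet.sUnion x : ZFSet) ∈ M
  infinity : ZFSet.omega ∈ M
  separation : ∀ (m : ℕ) (φ : Fml (m + 1)) (a : Fin m → ZFSet), (∀ i, a i ∈ M) →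
    ∀ x ∈ M, ZFSet.sep (fun y => Sat M φ (Fin.snoc a y)) x ∈ M
  collection : ∀ (m : ℕ) (φ : Fml (m + 2)) (a : Fin m → ZFSet), (∀ i, a i ∈ M) →
    ∀ x ∈ M, (∀ y ∈ x, ∃ z ∈ M, Sat M φ (Fin.snoc (Fin.snoc a y) z)) →
      ∃ b ∈ M, ∀ y ∈ x, ∃ z ∈ b, Sat M φ (Fin.snoc (Fin.snoc a y) z)

/-- `x` is a (von Neumann) ordinal. -/
def IsOrdZ (x : ZFSet) : Prop := x.IsTransitive ∧ ∀ y ∈ x, ZFSet.IsTransitive y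

/-- `α` is an ordinal of the model `M`. -/
def IsOrdIn (M α : ZFSet) : Prop := α ∈ M ∧ IsOrdZ α
/-- `f` is a (set-coded) function: a set of Kuratowski pairs which is functional. -/
def isFuncZ (f : ZFSet) : Prop :=
  (∀ x ∈ f, ∃ a b : ZFSet, x = ZFSet.pair a b) ∧
  ∀ a b b' : ZFSet, ZFSet.pair a b ∈ f → ZFSet.pair a b' ∈ f → b = b'

/-- `f` is injective (as a set-coded relation). -/
def isInjZ (f : ZFSet) : Prop :=
  ∀ a a' b : ZFSet, ZFSet.pair a b ∈ f → ZFSet.pair a' b ∈ f → a = a'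

/-- Domain of a set-coded relation. -/
def domZ (f : ZFSet) : Set ZFSet := {a | ∃ b, ZFSet.pair a b ∈ f}

/-- Range of a set-coded relation. -/
def ranZ (f : ZFSet) : Set ZFSet := {b | ∃ a, ZFSet.pair a b ∈ f}

/-- A set-coded binary relation is acyclic iff its transitive closure is irreflexive. -/
def acyclicZ (e : ZFSet) : Prop :=
  ∀ a : ZFSet, ¬ Relation.TransGen (fun x y => ZFSet.pair x y ∈ e) a a

/-- The ordered triple `⟨d, e, f⟩`. -/
def tripleZ (d e f : ZFSet) : ZFSet := ZFSet.pair d (ZFSet.pair e f)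
/-- `Col(ω, Ord)^M`: finite partial functions from `ω` to the ordinals of `M`,
ordered by reverse inclusion. -/
def ColP (M : ZFSet) : Set ZFSet :=
  {p | isFuncZ p ∧ p.toSet.Finite ∧ (∀ a, a ∈ domZ p → a ∈ ZFSet.omega) ∧
    (∀ b, b ∈ ranZ p → IsOrdIn M b)}

/-- `Col_*(ω, Ord)^M`: the suborder of `Col(ω, Ord)^M` consisting of the
conditions whose domain is a natural number. -/
def ColStarP (M : ZFSet) : Set ZFSet :=
  {p | p ∈ ColP M ∧ ∃ n ∈ ZFSet.omega, domZ p = n.toSet}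

/-!
Suppose `A ∈ M` is a maximal antichain other than `{∅}`; it then contains a condition `p₀ ≠ ∅`.
As `A ∈ M`, the values of the conditions in `A` form a set of ordinals in `M`, so some ordinal
`δ` of `M` is not among them. For `n ∈ ω` bounding `dom p₀`, the constant condition `n × {δ}` is
compatible with some `p ∈ A`, which therefore takes no value below `n`. Then `p ≠ p₀` have
disjoint domains, so they are compatible, contradicting that `A` is an antichain.
-/

open ZFSet

def natZ (n : ℕ) : ZFSet := mk (PSet.ofNat n)

theorem natZ_zero : natZ 0 = ∅ := rfl

theorem natZ_succ (n : ℕ) : natZ (n + 1) = insert (natZ n) (natZ n) := rfl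

theorem natZ_mem_omega (n : ℕ) : natZ n ∈ omega := by
  induction n with
  | zero => exact omega_zero
  | succ n ih => exact omega_succ ih

theorem exists_eq_natZ_of_mem_omega {x : ZFSet} (hx : x ∈ omega) : ∃ n, x = natZ n := by
  induction x using Quotient.inductionOn with
  | h x =>
    obtain ⟨⟨n⟩, h⟩ := hx
    exact ⟨n, sound h⟩

theorem mem_natZ {x : ZFSet} {n : ℕ} : x ∈ natZ n ↔ ∃ k < n, x = natZ k := by
  induction n with
  | zero => simp [natZ_zero]
  | succ n ih =>
    simp only [natZ_succ, mem_insert_iff, ih, Nat.lt_succ_iff_lt_or_eq, or_and_right, exists_or,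
      exists_eq_left]
    exact or_comm

theorem natZ_mem_natZ {k n : ℕ} (h : k < n) : natZ k ∈ natZ n := mem_natZ.2 ⟨k, h, rfl⟩

theorem natZ_injective : Function.Injective natZ := by
  intro k n h
  by_contra hne
  obtain hlt | hlt := Nat.lt_or_gt_of_ne hne
  all_goals
    have hmem := natZ_mem_natZ hlt
    rw [h] at hmem
    exact mem_irrefl _ hmem

theorem natZ_subset_omega (n : ℕ) : natZ n ⊆ omega := fun x hx => by
  obtain ⟨k, -, rfl⟩ := mem_natZ.1 hx
  exact natZ_mem_omega k

theorem finite_toSet_natZ (n : ℕ) : (natZ n).toSet.Finite :=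
  ((Set.finite_Iio n).image natZ).subset fun x hx => by
    obtain ⟨k, hk, rfl⟩ := mem_natZ.1 hx
    exact ⟨k, hk, rfl⟩

theorem isOrdZ_iff_isOrdinal {x : ZFSet} : IsOrdZ x ↔ x.IsOrdinal :=
  isOrdinal_iff_forall_mem_isTransitive.symm

theorem isOrdZ_sUnion {x : ZFSet} (h : ∀ y ∈ x, IsOrdZ y) : IsOrdZ (⋃₀ x) := by
  refine ⟨IsTransitive.sUnion' fun y hy => (h y hy).1, fun y hy => ?_⟩
  obtain ⟨z, hz, hyz⟩ := mem_sUnion.1 hy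
  exact (h z hz).2 y hyz

theorem isOrdinal_natZ (n : ℕ) : (natZ n).IsOrdinal := by
  induction n with
  | zero => exact isOrdinal_empty
  | succ n ih => exact isOrdinal_succ ih

theorem isOrdZ_of_mem_omega {x : ZFSet} (hx : x ∈ omega) : IsOrdZ x := by
  obtain ⟨n, rfl⟩ := exists_eq_natZ_of_mem_omega hx
  exact isOrdZ_iff_isOrdinal.2 (isOrdinal_natZ n)

theorem IsCTM.insert_self_mem {M x : ZFSet} (hM : IsCTM M) (hx : x ∈ M) : insert x x ∈ M := by
  have h : insert x x = ⋃₀ {{x, x}, x} := by rw [sUnion_pair, pair_eq_singleton, insert_eq]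
  rw [h]
  exact hM.union _ (hM.pairing _ (hM.pairing _ hx _ hx) _ hx)

theorem mem_sUnion_sUnion_of_pair_mem {a b R : ZFSet} (h : pair a b ∈ R) :
    a ∈ ⋃₀ ⋃₀ R ∧ b ∈ ⋃₀ ⋃₀ R := by
  have hab : ({a, b} : ZFSet) ∈ ⋃₀ R := mem_sUnion_of_mem (mem_pair.2 (Or.inr rfl)) h
  exact ⟨mem_sUnion_of_mem (mem_pair.2 (Or.inl rfl)) hab,
    mem_sUnion_of_mem (mem_pair.2 (Or.inr rfl)) hab⟩

theorem exists_pair_mem_of_mem_sUnion_sUnion {c R : ZFSet} (hR : ∀ x ∈ R, ∃ a b, x = pair a b)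
    (hc : c ∈ ⋃₀ ⋃₀ R) : ∃ a b, pair a b ∈ R ∧ (c = a ∨ c = b) := by
  obtain ⟨y, hy, hcy⟩ := mem_sUnion.1 hc
  obtain ⟨x, hx, hyx⟩ := mem_sUnion.1 hy
  obtain ⟨a, b, rfl⟩ := hR x hx
  refine ⟨a, b, hx, ?_⟩
  rcases mem_pair.1 hyx with rfl | rfl
  · exact Or.inl (mem_singleton.1 hcy)
  · exact mem_pair.1 hcy

theorem domZ_union (p q : ZFSet) : domZ (p ∪ q) = domZ p ∪ domZ q := by
  ext a
  simp only [domZ, Set.mem_ofPred_eq, Set.mem_union, mem_union, exists_or]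

theorem ranZ_union (p q : ZFSet) : ranZ (p ∪ q) = ranZ p ∪ ranZ q := by
  ext b
  simp only [ranZ, Set.mem_ofPred_eq, Set.mem_union, mem_union, exists_or]

theorem finite_domZ {p : ZFSet} (hp : p.toSet.Finite) : (domZ p).Finite := by
  refine (hp.biUnion fun x _ =>
    Set.Subsingleton.finite (s := {a | ∃ b, x = pair a b}) ?_).subset ?_
  · rintro a ⟨b, rfl⟩ a' ⟨b', h⟩
    exact (pair_injective h).1
  · rintro a ⟨b, hab⟩
    exact Set.mem_biUnion hab ⟨b, rfl⟩

theorem exists_domZ_subset_natZ {p : ZFSet} (hp : p.toSet.Finite)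
    (hdom : ∀ a ∈ domZ p, a ∈ omega) : ∃ n, domZ p ⊆ (natZ n).toSet := by
  obtain ⟨N, hN⟩ := ((finite_domZ hp).preimage natZ_injective.injOn).bddAbove
  refine ⟨N + 1, fun a ha => ?_⟩
  obtain ⟨k, rfl⟩ := exists_eq_natZ_of_mem_omega (hdom a ha)
  exact natZ_mem_natZ (Nat.lt_succ_of_le (hN ha))

theorem domZ_nonempty {p : ZFSet} (hp : isFuncZ p) (hne : p ≠ ∅) : (domZ p).Nonempty := by
  obtain ⟨x, hx⟩ := (eq_empty_or_nonempty p).resolve_left hne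
  obtain ⟨a, b, rfl⟩ := hp.1 x hx
  exact ⟨a, b, hx⟩

section Conditions

variable {M : ZFSet}

theorem union_mem_colP {p q : ZFSet} (hp : p ∈ ColP M) (hq : q ∈ ColP M)
    (hdisj : Disjoint (domZ p) (domZ q)) : p ∪ q ∈ ColP M := by
  obtain ⟨⟨hppair, hpfun⟩, hpfin, hpdom, hpran⟩ := hp
  obtain ⟨⟨hqpair, hqfun⟩, hqfin, hqdom, hqran⟩ := hq
  refine ⟨⟨fun x hx => ?_, fun a b b' hb hb' => ?_⟩, ?_, fun a ha => ?_, fun b hb => ?_⟩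
  · rcases mem_union.1 hx with h | h
    exacts [hppair x h, hqpair x h]
  · rcases mem_union.1 hb with h | h <;> rcases mem_union.1 hb' with h' | h'
    · exact hpfun a b b' h h'
    · exact (Set.disjoint_left.1 hdisj ⟨b, h⟩ ⟨b', h'⟩).elim
    · exact (Set.disjoint_left.1 hdisj ⟨b', h'⟩ ⟨b, h⟩).elim
    · exact hqfun a b b' h h'
  · exact (hpfin.union hqfin).subset fun x hx => mem_union.1 hx
  · rcases (domZ_union p q ▸ ha : a ∈ domZ p ∪ domZ q) with h | h
    exacts [hpdom a h, hqdom a h]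
  · rcases (ranZ_union p q ▸ hb : b ∈ ranZ p ∪ ranZ q) with h | h
    exacts [hpran b h, hqran b h]

theorem domZ_prod_singleton (d δ : ZFSet) : domZ (prod d {δ}) = d.toSet := by
  ext a
  exact ⟨fun ⟨_, h⟩ => (pair_mem_prod.1 h).1,
    fun h => ⟨δ, pair_mem_prod.2 ⟨h, mem_singleton.2 rfl⟩⟩⟩

theorem prod_singleton_mem_colP {d δ : ZFSet} (hd : d.toSet.Finite) (hdω : d ⊆ omega)
    (hδ : IsOrdIn M δ) : prod d {δ} ∈ ColP M := by
  refine ⟨⟨fun x hx => ?_, fun a b b' hb hb' => ?_⟩, ?_, fun a ha => ?_, ?_⟩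
  · obtain ⟨a, -, b, -, rfl⟩ := mem_prod.1 hx
    exact ⟨a, b, rfl⟩
  · rw [mem_singleton.1 (pair_mem_prod.1 hb).2, mem_singleton.1 (pair_mem_prod.1 hb').2]
  · refine (hd.image fun a => pair a δ).subset fun x hx => ?_
    obtain ⟨a, ha, b, hb, rfl⟩ := mem_prod.1 hx
    exact ⟨a, ha, by rw [mem_singleton.1 hb]⟩
  · rw [domZ_prod_singleton] at ha
    exact hdω ha
  · rintro b ⟨a, hab⟩
    rwa [mem_singleton.1 (pair_mem_prod.1 hab).2]

theorem prod_natZ_singleton_mem_colStarP {δ : ZFSet} (hδ : IsOrdIn M δ) (n : ℕ) :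
    prod (natZ n) {δ} ∈ ColStarP M :=
  ⟨prod_singleton_mem_colP (finite_toSet_natZ n) (natZ_subset_omega n) hδ, natZ n,
    natZ_mem_omega n, domZ_prod_singleton _ _⟩

/-- Fill the gaps of the domain below a bound `n` with the value `δ`. -/
theorem exists_colStarP_superset {p δ : ZFSet} (hp : p ∈ ColP M) (hδ : IsOrdIn M δ) :
    ∃ r ∈ ColStarP M, p ⊆ r := by
  obtain ⟨n, hn⟩ := exists_domZ_subset_natZ hp.2.1 hp.2.2.1
  set gaps := (natZ n).sep (· ∉ domZ p)
  have hgaps : prod gaps {δ} ∈ ColP M :=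
    prod_singleton_mem_colP ((finite_toSet_natZ n).subset sep_subset)
      (sep_subset.trans (natZ_subset_omega n)) hδ
  have hdisj : Disjoint (domZ p) (domZ (prod gaps {δ})) := by
    rw [domZ_prod_singleton]
    exact Set.disjoint_left.2 fun a ha hag => (mem_sep.1 hag).2 ha
  refine ⟨p ∪ prod gaps {δ}, ⟨union_mem_colP hp hgaps hdisj, natZ n, natZ_mem_omega n, ?_⟩,
    fun x hx => mem_union.2 (Or.inl hx)⟩
  rw [domZ_union, domZ_prod_singleton]
  ext a
  by_cases ha : a ∈ domZ p
  · simp [ha, hn ha]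
  · simp only [Set.mem_union, ha, false_or]
    exact ⟨fun h => (mem_sep.1 h).1, fun h => mem_sep.2 ⟨h, ha⟩⟩

theorem exists_colStarP_superset_of_disjoint {p q δ : ZFSet} (hp : p ∈ ColP M) (hq : q ∈ ColP M)
    (hdisj : Disjoint (domZ p) (domZ q)) (hδ : IsOrdIn M δ) :
    ∃ r ∈ ColStarP M, p ⊆ r ∧ q ⊆ r := by
  obtain ⟨r, hr, hpqr⟩ := exists_colStarP_superset (union_mem_colP hp hq hdisj) hδ
  exact ⟨r, hr, fun x hx => hpqr (mem_union.2 (Or.inl hx)),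
    fun x hx => hpqr (mem_union.2 (Or.inr hx))⟩

theorem disjoint_domZ_of_prod_singleton_subset {p r d δ : ZFSet} (hr : isFuncZ r)
    (hdr : prod d {δ} ⊆ r) (hpr : p ⊆ r) (hδ : δ ∉ ranZ p) : Disjoint (domZ p) d.toSet :=
  Set.disjoint_left.2 fun a ⟨b, hab⟩ had =>
    hδ ⟨a, hr.2 a b δ (hpr hab) (hdr (pair_mem_prod.2 ⟨had, mem_singleton.2 rfl⟩)) ▸ hab⟩

/-- The values of the conditions in `A` form a set in `M` of ordinals; the successor of their
supremum is an ordinal of `M` that none of them takes. -/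
theorem exists_isOrdIn_notMem_ranZ {A : ZFSet} (hM : IsCTM M) (hA : A ∈ M)
    (hcond : ∀ p ∈ A, p ∈ ColP M) : ∃ δ, IsOrdIn M δ ∧ ∀ p ∈ A, δ ∉ ranZ p := by
  set S := ⋃₀ ⋃₀ ⋃₀ A
  have hpairs : ∀ x ∈ ⋃₀ A, ∃ a b, x = pair a b := fun x hx => by
    obtain ⟨p, hp, hxp⟩ := mem_sUnion.1 hx
    exact (hcond p hp).1.1 x hxp
  have hS : ∀ s ∈ S, IsOrdZ s := by
    intro s hs
    obtain ⟨a, b, hab, rfl | rfl⟩ := exists_pair_mem_of_mem_sUnion_sUnion hpairs hs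
    all_goals obtain ⟨p, hp, habp⟩ := mem_sUnion.1 hab
    · exact isOrdZ_of_mem_omega ((hcond p hp).2.2.1 _ ⟨b, habp⟩)
    · exact ((hcond p hp).2.2.2 _ ⟨a, habp⟩).2
  have hγM : ⋃₀ S ∈ M := hM.union _ (hM.union _ (hM.union _ (hM.union _ hA)))
  refine ⟨insert (⋃₀ S) (⋃₀ S), ⟨hM.insert_self_mem hγM,
    isOrdZ_iff_isOrdinal.2 (isOrdinal_succ (isOrdZ_iff_isOrdinal.1 (isOrdZ_sUnion hS)))⟩, ?_⟩
  rintro p hp ⟨a, hδp⟩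
  have hδS : insert (⋃₀ S) (⋃₀ S) ∈ S :=
    (mem_sUnion_sUnion_of_pair_mem (mem_sUnion_of_mem hδp hp)).2
  exact mem_irrefl _ (mem_sUnion_of_mem (mem_insert _ _) hδS)

end Conditions

/-- Let `M` be a countable transitive model of `ZF⁻` and let `Col`
be either `Col(ω, Ord)^M` or `Col_*(ω, Ord)^M` (ordered by reverse inclusion, so
`r ≤ p` iff `p ⊆ r`). Then no antichain `A ∈ M` of `Col` other than `{∅}`
(where `∅` is the maximal condition) is a maximal antichain. -/
theorem statement6 (M : ZFSet) (hM : IsCTM M) (Col : Set ZFSet)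
    (hCol : Col = ColP M ∨ Col = ColStarP M)
    (A : ZFSet) (hA : A ∈ M) (hsub : ∀ p ∈ A, p ∈ Col)
    (hanti : ∀ p ∈ A, ∀ q ∈ A, p ≠ q → ¬ ∃ r ∈ Col, p ⊆ r ∧ q ⊆ r)
    (hnontriv : A ≠ ({∅} : ZFSet)) :
    ¬ ∀ p ∈ Col, ∃ q, q ∈ A ∧ ∃ r ∈ Col, p ⊆ r ∧ q ⊆ r := by
  intro hmax
  have hColP : ∀ p ∈ Col, p ∈ ColP M := by
    rcases hCol with rfl | rfl
    exacts [fun _ h => h, fun _ h => h.1]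
  have hColStarP : ∀ p ∈ ColStarP M, p ∈ Col := by
    rcases hCol with rfl | rfl
    exacts [fun _ h => h.1, fun _ h => h]
  obtain ⟨δ, hδ, hδA⟩ := exists_isOrdIn_notMem_ranZ hM hA fun p hp => hColP p (hsub p hp)
  obtain ⟨p₀, hp₀A, hp₀⟩ : ∃ p₀ ∈ A, p₀ ≠ ∅ := by
    obtain ⟨q, hqA, -⟩ := hmax _ (hColStarP _ (prod_natZ_singleton_mem_colStarP hδ 0))
    by_contra! h
    exact hnontriv (ext fun z => ⟨fun hz => mem_singleton.2 (h z hz),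
      fun hz => mem_singleton.1 hz ▸ h q hqA ▸ hqA⟩)
  have hp₀P := hColP p₀ (hsub p₀ hp₀A)
  obtain ⟨n, hn⟩ := exists_domZ_subset_natZ hp₀P.2.1 hp₀P.2.2.1
  obtain ⟨p, hpA, r, hr, hδr, hpr⟩ :=
    hmax _ (hColStarP _ (prod_natZ_singleton_mem_colStarP hδ n))
  have hdisj : Disjoint (domZ p) (domZ p₀) :=
    (disjoint_domZ_of_prod_singleton_subset (hColP r hr).1 hδr hpr (hδA p hpA)).mono_right hn
  have hne : p ≠ p₀ := by
    rintro rfl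
    obtain ⟨a, ha⟩ := domZ_nonempty hp₀P.1 hp₀
    exact Set.disjoint_left.1 hdisj ha ha
  obtain ⟨r', hr', hpr', hp₀r'⟩ :=
    exists_colStarP_superset_of_disjoint (hColP p (hsub p hpA)) hp₀P hdisj hδ
  exact hanti p hpA p₀ hp₀A hne ⟨r', hColStarP _ hr', hpr', hp₀r'⟩

end CF
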